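/- arXiv:1110.3023 — 7 statements merged into one kernel-verified Lean document; each statement's English description precedes it below -/
import Mathlib

section
/- Let V be a real vector space with an almost contact B-metric structure (φ, ξ, η, g), let F be a trilinear form on V satisfying the 𝒰-conditions, and let T be the torsion tensor of the φB-connection expressed through F. Then for all x, y, z ∈ V: (i) T(ξ,y,z) = F(y,φz,ξ); (ii) T(x,y,z) = η(x)T(ξ,y,z) − η(y)T(ξ,x,z) + η(z)T(ξ,x,y) − η(z)T(ξ,y,x); and (iii) T(x,y,z) = η(z)T(φ²x,φ²y,ξ) + η(x)T(ξ,φ²y,φ²z) − η(y)T(ξ,φ²x,φ²z). (Identity (iii) expresses that T belongs to the class 𝒯₂₁ ⊕ 𝒯₂₂ ⊕ 𝒯₃₁ ⊕ 𝒯₃₂ ⊕ 𝒯₃₃ ⊕ 𝒯₃₄ of the invariant decomposition of torsion tensors.) -/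
section AlmostContact

variable {V : Type*} [AddCommGroup V] [Module ℝ V] {φ : V →ₗ[ℝ] V} {ξ : V} {η : V →ₗ[ℝ] ℝ}
  {F : V →ₗ[ℝ] V →ₗ[ℝ] V →ₗ[ℝ] ℝ}

lemma eta_phi_sq (hφ2 : ∀ x, φ (φ x) = -x + η x • ξ) (hηξ : η ξ = 1) (x : V) :
    η (φ (φ x)) = 0 := by
  simp [hφ2, hηξ]

lemma phi_cube (hφ2 : ∀ x, φ (φ x) = -x + η x • ξ) (hφξ : φ ξ = 0) (x : V) :
    φ (φ (φ x)) = -φ x := by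
  rw [hφ2 x, map_add, map_neg, map_smul, hφξ, smul_zero, add_zero]

lemma apply_phi_sq_of_apply_xi_eq_zero (hφ2 : ∀ x, φ (φ x) = -x + η x • ξ)
    (hU1 : ∀ y z, F ξ y z = 0) (x y z : V) : F (φ (φ x)) y z = -F x y z := by
  simp [hφ2, hU1]

variable (φ ξ η F) in
def phiBTorsion (x y z : V) : ℝ :=
  η x * F y (φ z) ξ - η y * F x (φ z) ξ + η z * (F x (φ y) ξ - F y (φ x) ξ)

lemma phiBTorsion_xi_left (hφξ : φ ξ = 0) (hηξ : η ξ = 1) (hU1 : ∀ y z, F ξ y z = 0)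
    (y z : V) : phiBTorsion φ ξ η F ξ y z = F y (φ z) ξ := by
  simp [phiBTorsion, hφξ, hηξ, hU1]

lemma phiBTorsion_eq_xi_left_combination (hφξ : φ ξ = 0) (hηξ : η ξ = 1)
    (hU1 : ∀ y z, F ξ y z = 0) (x y z : V) :
    phiBTorsion φ ξ η F x y z =
      η x * phiBTorsion φ ξ η F ξ y z - η y * phiBTorsion φ ξ η F ξ x z
        + η z * phiBTorsion φ ξ η F ξ x y - η z * phiBTorsion φ ξ η F ξ y x := by
  simp only [phiBTorsion_xi_left hφξ hηξ hU1]
  rw [phiBTorsion]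
  ring

lemma phiBTorsion_phi_sq_xi_right (hφξ : φ ξ = 0) (hφ2 : ∀ x, φ (φ x) = -x + η x • ξ)
    (hηξ : η ξ = 1) (hU1 : ∀ y z, F ξ y z = 0) (x y : V) :
    phiBTorsion φ ξ η F (φ (φ x)) (φ (φ y)) ξ = F x (φ y) ξ - F y (φ x) ξ := by
  simp only [phiBTorsion, eta_phi_sq hφ2 hηξ, hηξ, phi_cube hφ2 hφξ,
    apply_phi_sq_of_apply_xi_eq_zero hφ2 hU1, map_neg, LinearMap.neg_apply]
  ring

lemma phiBTorsion_xi_left_phi_sq (hφξ : φ ξ = 0) (hφ2 : ∀ x, φ (φ x) = -x + η x • ξ)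
    (hηξ : η ξ = 1) (hU1 : ∀ y z, F ξ y z = 0) (y z : V) :
    phiBTorsion φ ξ η F ξ (φ (φ y)) (φ (φ z)) = F y (φ z) ξ := by
  rw [phiBTorsion_xi_left hφξ hηξ hU1, phi_cube hφ2 hφξ,
    apply_phi_sq_of_apply_xi_eq_zero hφ2 hU1]
  simp

lemma phiBTorsion_eq_phi_sq_combination (hφξ : φ ξ = 0)
    (hφ2 : ∀ x, φ (φ x) = -x + η x • ξ) (hηξ : η ξ = 1) (hU1 : ∀ y z, F ξ y z = 0)
    (x y z : V) :
    phiBTorsion φ ξ η F x y z =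
      η z * phiBTorsion φ ξ η F (φ (φ x)) (φ (φ y)) ξ
        + η x * phiBTorsion φ ξ η F ξ (φ (φ y)) (φ (φ z))
        - η y * phiBTorsion φ ξ η F ξ (φ (φ x)) (φ (φ z)) := by
  rw [phiBTorsion_phi_sq_xi_right hφξ hφ2 hηξ hU1, phiBTorsion_xi_left_phi_sq hφξ hφ2 hηξ hU1,
    phiBTorsion_xi_left_phi_sq hφξ hφ2 hηξ hU1, phiBTorsion]
  ring

end AlmostContact

theorem statement1_general
    {V : Type*} [AddCommGroup V] [Module ℝ V]
    (φ : V →ₗ[ℝ] V) (ξ : V) (η : V →ₗ[ℝ] ℝ)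
    (hφξ : φ ξ = 0)
    (hφ2 : ∀ x : V, φ (φ x) = -x + η x • ξ)
    (hηξ : η ξ = 1)
    (F : V →ₗ[ℝ] V →ₗ[ℝ] V →ₗ[ℝ] ℝ)
    (hU1 : ∀ y z : V, F ξ y z = 0)
    (T : V → V → V → ℝ)
    (hT : ∀ x y z : V, T x y z =
      η x * F y (φ z) ξ - η y * F x (φ z) ξ
        + η z * (F x (φ y) ξ - F y (φ x) ξ)) :
    (∀ y z : V, T ξ y z = F y (φ z) ξ) ∧
    (∀ x y z : V, T x y z =
      η x * T ξ y z - η y * T ξ x z + η z * T ξ x y - η z * T ξ y x) ∧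
    (∀ x y z : V, T x y z =
      η z * T (φ (φ x)) (φ (φ y)) ξ
        + η x * T ξ (φ (φ y)) (φ (φ z))
        - η y * T ξ (φ (φ x)) (φ (φ z))) := by
  obtain rfl : T = phiBTorsion φ ξ η F := funext fun x => funext fun y => funext (hT x y)
  exact ⟨phiBTorsion_xi_left hφξ hηξ hU1,
    phiBTorsion_eq_xi_left_combination hφξ hηξ hU1,
    phiBTorsion_eq_phi_sq_combination hφξ hφ2 hηξ hU1⟩

/-- Properties of the torsion `T` of the φB-connection on a
manifold of the class 𝒰, expressed pointwise through the tensor `F`. -/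
theorem statement1
    {V : Type*} [AddCommGroup V] [Module ℝ V]
    (φ : V →ₗ[ℝ] V) (ξ : V) (η : V →ₗ[ℝ] ℝ) (g : V →ₗ[ℝ] V →ₗ[ℝ] ℝ)
    (hsym : ∀ x y : V, g x y = g y x)
    (hnd : ∀ x : V, (∀ y : V, g x y = 0) → x = 0)
    (hφξ : φ ξ = 0)
    (hφ2 : ∀ x : V, φ (φ x) = -x + η x • ξ)
    (hηφ : ∀ x : V, η (φ x) = 0)
    (hηξ : η ξ = 1)
    (hgφ : ∀ x y : V, g (φ x) (φ y) = -(g x y) + η x * η y)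
    (F : V →ₗ[ℝ] V →ₗ[ℝ] V →ₗ[ℝ] ℝ)
    (hU1 : ∀ y z : V, F ξ y z = 0)
    (hU2 : ∀ x y z : V, F x y z = η y * F x z ξ + η z * F x y ξ)
    (T : V → V → V → ℝ)
    (hT : ∀ x y z : V, T x y z =
      η x * F y (φ z) ξ - η y * F x (φ z) ξ
        + η z * (F x (φ y) ξ - F y (φ x) ξ)) :
    (∀ y z : V, T ξ y z = F y (φ z) ξ) ∧
    (∀ x y z : V, T x y z =
      η x * T ξ y z - η y * T ξ x z + η z * T ξ x y - η z * T ξ y x) ∧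
    (∀ x y z : V, T x y z =
      η z * T (φ (φ x)) (φ (φ y)) ξ
        + η x * T ξ (φ (φ y)) (φ (φ z))
        - η y * T ξ (φ (φ x)) (φ (φ z))) :=
  statement1_general φ ξ η hφξ hφ2 hηξ F hU1 T hT
end

section
/- Let V be a real vector space with an almost contact B-metric structure (φ, ξ, η, g), let F be a trilinear form on V satisfying the 𝒰-conditions and additionally the 𝒰₃-conditions F(x,y,ξ) = F(y,x,ξ) = −F(φx,φy,ξ) for all x, y ∈ V, and let T be the torsion tensor of the φB-connection expressed through F. Then for all x, y, z ∈ V: T(x,y,z) = η(x)T(ξ,φ²y,φ²z) − η(y)T(ξ,φ²x,φ²z) and T(ξ,y,z) = T(ξ,z,y) = −T(ξ,φy,φz). (These identities express that T belongs to the basic class 𝒯₃₁ of the invariant decomposition of torsion tensors.) -/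
/-! On 𝒰₃ the form `B(x, y) := F(x, y, ξ)` is symmetric, vanishes on `ξ` and satisfies
`B(φx, φy) = -B(x, y)`; hence `B(x, φy) = B(φx, y)` and `(x, y) ↦ B(x, φy)` is symmetric. The torsion
then collapses to `T(x, y, z) = η(x) B(y, φz) - η(y) B(x, φz)`, while `T(ξ, y, z) = B(y, φz)`,
and the 𝒯₃₁ identities follow using `φ³ = -φ`. -/

section AlmostContact

variable {V : Type*} [AddCommGroup V] [Module ℝ V] {φ : V →ₗ[ℝ] V} {ξ : V} {η : V →ₗ[ℝ] ℝ}

theorem phi_phi_phi_eq_neg (hφξ : φ ξ = 0) (hφ2 : ∀ x : V, φ (φ x) = -x + η x • ξ) (x : V) :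
    φ (φ (φ x)) = -φ x := by
  rw [hφ2 x, map_add, map_neg, map_smul, hφξ, smul_zero, add_zero]

variable (B : V →ₗ[ℝ] V →ₗ[ℝ] ℝ)

theorem apply_phi_phi_left (hφ2 : ∀ x : V, φ (φ x) = -x + η x • ξ) (hBξ : ∀ y, B ξ y = 0)
    (x y : V) : B (φ (φ x)) y = -B x y := by
  simp [hφ2, hBξ]

theorem apply_phi_phi_right (hφ2 : ∀ x : V, φ (φ x) = -x + η x • ξ) (hBξ : ∀ x, B x ξ = 0)
    (x y : V) : B x (φ (φ y)) = -B x y := by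
  simp [hφ2, hBξ]

theorem apply_phi_right_eq_apply_phi_left (hφ2 : ∀ x : V, φ (φ x) = -x + η x • ξ)
    (hBξ : ∀ x, B x ξ = 0) (hBφ : ∀ x y, B x y = -B (φ x) (φ y)) (x y : V) :
    B x (φ y) = B (φ x) y := by
  rw [hBφ, apply_phi_phi_right B hφ2 hBξ, neg_neg]

end AlmostContact

theorem statement3_general
    {V : Type*} [AddCommGroup V] [Module ℝ V]
    (φ : V →ₗ[ℝ] V) (ξ : V) (η : V →ₗ[ℝ] ℝ)
    (hφξ : φ ξ = 0)
    (hφ2 : ∀ x : V, φ (φ x) = -x + η x • ξ)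
    (hηξ : η ξ = 1)
    (F : V →ₗ[ℝ] V →ₗ[ℝ] V →ₗ[ℝ] ℝ)
    (hU1 : ∀ y z : V, F ξ y z = 0)
    (hU2 : ∀ x y z : V, F x y z = η y * F x z ξ + η z * F x y ξ)
    (hU3a : ∀ x y : V, F x y ξ = F y x ξ)
    (hU3b : ∀ x y : V, F x y ξ = -F (φ x) (φ y) ξ)
    (T : V → V → V → ℝ)
    (hT : ∀ x y z : V, T x y z =
      η x * F y (φ z) ξ - η y * F x (φ z) ξ
        + η z * (F x (φ y) ξ - F y (φ x) ξ)) :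
    (∀ x y z : V, T x y z =
      η x * T ξ (φ (φ y)) (φ (φ z)) - η y * T ξ (φ (φ x)) (φ (φ z))) ∧
    (∀ y z : V, T ξ y z = T ξ z y) ∧
    (∀ y z : V, T ξ y z = -T ξ (φ y) (φ z)) := by
  let B : V →ₗ[ℝ] V →ₗ[ℝ] ℝ := F.compr₂ (LinearMap.applyₗ ξ)
  have hBξ : ∀ x, B x ξ = 0 := fun x => by
    have h := hU2 x ξ ξ
    rw [hηξ] at h
    show F x ξ ξ = 0
    linarith
  have hφB : ∀ x y, B x (φ y) = B (φ x) y :=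
    apply_phi_right_eq_apply_phi_left B hφ2 hBξ hU3b
  have hBφ_symm : ∀ x y, B x (φ y) = B y (φ x) := fun x y => by
    rw [hφB]; exact hU3a _ _
  have hTξ : ∀ y z, T ξ y z = B y (φ z) := fun y z => by
    simp [hT, hU1, hηξ, hφξ, B]
  refine ⟨fun x y z => ?_, fun y z => ?_, fun y z => ?_⟩
  · have hsq : ∀ w, T ξ (φ (φ w)) (φ (φ z)) = B w (φ z) := fun w => by
      rw [hTξ, phi_phi_phi_eq_neg hφξ hφ2, map_neg,
        apply_phi_phi_left B hφ2 (hU1 · ξ), neg_neg]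
    have hcancel : F x (φ y) ξ - F y (φ x) ξ = 0 := sub_eq_zero.2 (hBφ_symm x y)
    rw [hT, hcancel, hsq, hsq, mul_zero, add_zero]
    rfl
  · rw [hTξ, hTξ, hBφ_symm]
  · rw [hTξ, hTξ, apply_phi_phi_right B hφ2 hBξ, neg_neg, hφB]

/-- On a manifold of the class 𝒰₃ the torsion `T` of the
φB-connection belongs to the basic class 𝒯₃₁. -/
theorem statement3
    {V : Type*} [AddCommGroup V] [Module ℝ V]
    (φ : V →ₗ[ℝ] V) (ξ : V) (η : V →ₗ[ℝ] ℝ) (g : V →ₗ[ℝ] V →ₗ[ℝ] ℝ)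
    (hsym : ∀ x y : V, g x y = g y x)
    (hnd : ∀ x : V, (∀ y : V, g x y = 0) → x = 0)
    (hφξ : φ ξ = 0)
    (hφ2 : ∀ x : V, φ (φ x) = -x + η x • ξ)
    (hηφ : ∀ x : V, η (φ x) = 0)
    (hηξ : η ξ = 1)
    (hgφ : ∀ x y : V, g (φ x) (φ y) = -(g x y) + η x * η y)
    (F : V →ₗ[ℝ] V →ₗ[ℝ] V →ₗ[ℝ] ℝ)
    (hU1 : ∀ y z : V, F ξ y z = 0)
    (hU2 : ∀ x y z : V, F x y z = η y * F x z ξ + η z * F x y ξ)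
    (hU3a : ∀ x y : V, F x y ξ = F y x ξ)
    (hU3b : ∀ x y : V, F x y ξ = -F (φ x) (φ y) ξ)
    (T : V → V → V → ℝ)
    (hT : ∀ x y z : V, T x y z =
      η x * F y (φ z) ξ - η y * F x (φ z) ξ
        + η z * (F x (φ y) ξ - F y (φ x) ξ)) :
    (∀ x y z : V, T x y z =
      η x * T ξ (φ (φ y)) (φ (φ z)) - η y * T ξ (φ (φ x)) (φ (φ z))) ∧
    (∀ y z : V, T ξ y z = T ξ z y) ∧
    (∀ y z : V, T ξ y z = -T ξ (φ y) (φ z)) :=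
  statement3_general φ ξ η hφξ hφ2 hηξ F hU1 hU2 hU3a hU3b T hT
end

section
/- Let V be a real vector space with an almost contact B-metric structure (φ, ξ, η, g), let F be a trilinear form on V satisfying the 𝒰-conditions and additionally the 𝒰₁-condition F(x,φy,ξ) = F(y,φx,ξ) for all x, y ∈ V, let T be the torsion tensor of the φB-connection expressed through F, and define the potential Q(x,y,z) := η(z)F(x,φy,ξ) − η(y)F(x,φz,ξ). Then for all x, y, z ∈ V: Q(x,y,z) = T(z,y,x) and T(x,y,z) + T(y,z,x) + T(z,x,y) = 0. -/
/-!
With `A(x,y) := F(x,φy,ξ)`, both `T` and `Q` are built from `η` and `A` alone, and the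
𝒰₁-condition says exactly that `A` is symmetric. Both identities are formal consequences of
that symmetry.
-/

section TorsionOfSymmetric

variable {V R : Type*} [CommRing R] (η : V → R) (A : V → V → R)

def torsionOf (x y z : V) : R :=
  η x * A y z - η y * A x z + η z * (A x y - A y x)

def potentialOf (x y z : V) : R :=
  η z * A x y - η y * A x z

variable {η A}

theorem potentialOf_eq_torsionOf_swap (hA : ∀ x y, A x y = A y x) (x y z : V) :
    potentialOf η A x y z = torsionOf η A z y x := by
  rw [potentialOf, torsionOf, hA z y, hA z x, hA y x]
  ring

theorem torsionOf_cyclic_sum (hA : ∀ x y, A x y = A y x) (x y z : V) :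
    torsionOf η A x y z + torsionOf η A y z x + torsionOf η A z x y = 0 := by
  rw [torsionOf, torsionOf, torsionOf, hA x y, hA y z, hA z x]
  ring

end TorsionOfSymmetric

theorem statement5_general
    {V : Type*} [AddCommGroup V] [Module ℝ V]
    (φ : V →ₗ[ℝ] V) (ξ : V) (η : V →ₗ[ℝ] ℝ)
    (F : V →ₗ[ℝ] V →ₗ[ℝ] V →ₗ[ℝ] ℝ)
    (hU1cond : ∀ x y : V, F x (φ y) ξ = F y (φ x) ξ)
    (T : V → V → V → ℝ)
    (hT : ∀ x y z : V, T x y z =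
      η x * F y (φ z) ξ - η y * F x (φ z) ξ
        + η z * (F x (φ y) ξ - F y (φ x) ξ))
    (Q : V → V → V → ℝ)
    (hQ : ∀ x y z : V, Q x y z = η z * F x (φ y) ξ - η y * F x (φ z) ξ) :
    (∀ x y z : V, Q x y z = T z y x) ∧
    (∀ x y z : V, T x y z + T y z x + T z x y = 0) := by
  set A : V → V → ℝ := fun x y => F x (φ y) ξ
  have hT' : ∀ x y z, T x y z = torsionOf η A x y z := hT
  have hQ' : ∀ x y z, Q x y z = potentialOf η A x y z := hQ
  refine ⟨fun x y z => ?_, fun x y z => ?_⟩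
  · rw [hQ', hT']
    exact potentialOf_eq_torsionOf_swap hU1cond x y z
  · rw [hT', hT', hT']
    exact torsionOf_cyclic_sum hU1cond x y z

/-- On a manifold of the class 𝒰₁, the potential `Q` and the
torsion `T` of the φB-connection satisfy `Q(x,y,z) = T(z,y,x)` and the
cyclic sum of `T` vanishes. -/
theorem statement5
    {V : Type*} [AddCommGroup V] [Module ℝ V]
    (φ : V →ₗ[ℝ] V) (ξ : V) (η : V →ₗ[ℝ] ℝ) (g : V →ₗ[ℝ] V →ₗ[ℝ] ℝ)
    (hsym : ∀ x y : V, g x y = g y x)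
    (hnd : ∀ x : V, (∀ y : V, g x y = 0) → x = 0)
    (hφξ : φ ξ = 0)
    (hφ2 : ∀ x : V, φ (φ x) = -x + η x • ξ)
    (hηφ : ∀ x : V, η (φ x) = 0)
    (hηξ : η ξ = 1)
    (hgφ : ∀ x y : V, g (φ x) (φ y) = -(g x y) + η x * η y)
    (F : V →ₗ[ℝ] V →ₗ[ℝ] V →ₗ[ℝ] ℝ)
    (hU1 : ∀ y z : V, F ξ y z = 0)
    (hU2 : ∀ x y z : V, F x y z = η y * F x z ξ + η z * F x y ξ)
    (hU1cond : ∀ x y : V, F x (φ y) ξ = F y (φ x) ξ)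
    (T : V → V → V → ℝ)
    (hT : ∀ x y z : V, T x y z =
      η x * F y (φ z) ξ - η y * F x (φ z) ξ
        + η z * (F x (φ y) ξ - F y (φ x) ξ))
    (Q : V → V → V → ℝ)
    (hQ : ∀ x y z : V, Q x y z = η z * F x (φ y) ξ - η y * F x (φ z) ξ) :
    (∀ x y z : V, Q x y z = T z y x) ∧
    (∀ x y z : V, T x y z + T y z x + T z x y = 0) :=
  statement5_general φ ξ η F hU1cond T hT Q hQ
end

section
/- Let V be a real vector space with an almost contact B-metric structure (φ, ξ, η, g), let F be a trilinear form on V satisfying the 𝒰-conditions and additionally the 𝒰₃-conditions F(x,y,ξ) = F(y,x,ξ) = −F(φx,φy,ξ) for all x, y ∈ V, and let T be the torsion tensor of the φB-connection expressed through F. Then for all x, y, z ∈ V: (i) T(φx,y,z) + T(x,φy,z) − T(x,y,φz) = 0; (ii) T(x,y,z) + T(φx,y,φz) + T(x,φy,φz) = 0; (iii) T(x,φy,φz) = T(x,φz,φy); (iv) T(x,y,z) − T(x,z,y) = η(y)T(x,ξ,z) − η(z)T(x,ξ,y). -/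
/-!
On the class 𝒰₃ the bilinear form ω(x,y) = F(x,y,ξ) is symmetric, vanishes on ξ and is
φ-anti-invariant, so ψ(x,y) = ω(x,φy) is again symmetric and φ is ψ-self-adjoint. The last
term of the torsion is η(z)(ψ(x,y) − ψ(y,x)) = 0, hence T(x,y,z) = η(x)ψ(y,z) − η(y)ψ(x,z),
and all four identities follow from η ∘ φ = 0, η(ξ) = 1 and these symmetries of ψ.
-/

section XiForm

variable {V : Type*} [AddCommGroup V] [Module ℝ V]
  {φ : V →ₗ[ℝ] V} {ξ : V} {η : V →ₗ[ℝ] ℝ} {ω : V →ₗ[ℝ] V →ₗ[ℝ] ℝ}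

theorem apply_phi_phi_right_of_apply_xi (hφ2 : ∀ x : V, φ (φ x) = -x + η x • ξ)
    (hξ : ∀ x, ω x ξ = 0) (x y : V) : ω x (φ (φ y)) = -ω x y := by
  simp [hφ2, hξ]

theorem apply_phi_left_eq_apply_phi_right (hφ2 : ∀ x : V, φ (φ x) = -x + η x • ξ)
    (hξ : ∀ x, ω x ξ = 0) (hφ : ∀ x y, ω x y = -ω (φ x) (φ y)) (x y : V) :
    ω (φ x) y = ω x (φ y) := by
  have h := hφ x (φ y)
  rw [apply_phi_phi_right_of_apply_xi hφ2 hξ] at h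
  linarith

theorem apply_phi_right_comm (hφ2 : ∀ x : V, φ (φ x) = -x + η x • ξ)
    (hsymm : ∀ x y, ω x y = ω y x) (hξ : ∀ y, ω ξ y = 0)
    (hφ : ∀ x y, ω x y = -ω (φ x) (φ y)) (x y : V) :
    ω x (φ y) = ω y (φ x) := by
  have hξ' : ∀ x, ω x ξ = 0 := fun x => by rw [hsymm, hξ]
  rw [hsymm, apply_phi_left_eq_apply_phi_right hφ2 hξ' hφ]

end XiForm

section TorsionForm

variable {V : Type*} [AddCommGroup V] [Module ℝ V]
  {φ : V →ₗ[ℝ] V} {ξ : V} {η : V →ₗ[ℝ] ℝ} {ψ : V →ₗ[ℝ] V →ₗ[ℝ] ℝ}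

def torsionForm (η : V →ₗ[ℝ] ℝ) (ψ : V →ₗ[ℝ] V →ₗ[ℝ] ℝ) (x y z : V) : ℝ :=
  η x * ψ y z - η y * ψ x z

theorem torsionForm_phi_cyclic (hηφ : ∀ x, η (φ x) = 0)
    (hψφ : ∀ x y, ψ (φ x) y = ψ x (φ y)) (x y z : V) :
    torsionForm η ψ (φ x) y z + torsionForm η ψ x (φ y) z - torsionForm η ψ x y (φ z) = 0 := by
  simp only [torsionForm, hηφ, hψφ]
  ring

theorem torsionForm_add_phi (hηφ : ∀ x, η (φ x) = 0)
    (hψφφ : ∀ x y, ψ (φ x) (φ y) = -ψ x y) (x y z : V) :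
    torsionForm η ψ x y z + torsionForm η ψ (φ x) y (φ z)
      + torsionForm η ψ x (φ y) (φ z) = 0 := by
  simp only [torsionForm, hηφ, hψφφ]
  ring

theorem torsionForm_phi_phi_comm (hηφ : ∀ x, η (φ x) = 0) (hsymm : ∀ x y, ψ x y = ψ y x)
    (x y z : V) : torsionForm η ψ x (φ y) (φ z) = torsionForm η ψ x (φ z) (φ y) := by
  simp only [torsionForm, hηφ, zero_mul, hsymm (φ y)]

theorem torsionForm_sub_swap (hηξ : η ξ = 1) (hsymm : ∀ x y, ψ x y = ψ y x)
    (hψξ : ∀ y, ψ ξ y = 0) (x y z : V) :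
    torsionForm η ψ x y z - torsionForm η ψ x z y
      = η y * torsionForm η ψ x ξ z - η z * torsionForm η ψ x ξ y := by
  simp only [torsionForm, hηξ, hψξ, hsymm y z]
  ring

end TorsionForm

theorem statement6_general
    {V : Type*} [AddCommGroup V] [Module ℝ V]
    (φ : V →ₗ[ℝ] V) (ξ : V) (η : V →ₗ[ℝ] ℝ)
    (hφ2 : ∀ x : V, φ (φ x) = -x + η x • ξ)
    (hηφ : ∀ x : V, η (φ x) = 0)
    (hηξ : η ξ = 1)
    (F : V →ₗ[ℝ] V →ₗ[ℝ] V →ₗ[ℝ] ℝ)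
    (hU1 : ∀ y z : V, F ξ y z = 0)
    (hU3a : ∀ x y : V, F x y ξ = F y x ξ)
    (hU3b : ∀ x y : V, F x y ξ = -F (φ x) (φ y) ξ)
    (T : V → V → V → ℝ)
    (hT : ∀ x y z : V, T x y z =
      η x * F y (φ z) ξ - η y * F x (φ z) ξ
        + η z * (F x (φ y) ξ - F y (φ x) ξ)) :
    (∀ x y z : V, T (φ x) y z + T x (φ y) z - T x y (φ z) = 0) ∧
    (∀ x y z : V, T x y z + T (φ x) y (φ z) + T x (φ y) (φ z) = 0) ∧
    (∀ x y z : V, T x (φ y) (φ z) = T x (φ z) (φ y)) ∧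
    (∀ x y z : V, T x y z - T x z y = η y * T x ξ z - η z * T x ξ y) := by
  set ω := F.compr₂ (LinearMap.applyₗ ξ)
  have hωξ : ∀ y, ω ξ y = 0 := fun y => hU1 y ξ
  have hωξ' : ∀ x, ω x ξ = 0 := fun x => (hU3a x ξ).trans (hU1 x ξ)
  have hψsymm : ∀ x y, ω.compl₂ φ x y = ω.compl₂ φ y x :=
    apply_phi_right_comm hφ2 hU3a hωξ hU3b
  have hψφ : ∀ x y, ω.compl₂ φ (φ x) y = ω.compl₂ φ x (φ y) := fun x y =>
    apply_phi_left_eq_apply_phi_right hφ2 hωξ' hU3b x (φ y)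
  have hψφφ : ∀ x y, ω.compl₂ φ (φ x) (φ y) = -ω.compl₂ φ x y := fun x y => by
    rw [hψφ]
    exact apply_phi_phi_right_of_apply_xi hφ2 hωξ' x (φ y)
  have hT_eq : T = torsionForm η (ω.compl₂ φ) := by
    ext x y z
    rw [hT, torsionForm, show F x (φ y) ξ = F y (φ x) ξ from hψsymm x y, sub_self, mul_zero,
      add_zero]
    rfl
  subst hT_eq
  exact ⟨torsionForm_phi_cyclic hηφ hψφ, torsionForm_add_phi hηφ hψφφ,
    torsionForm_phi_phi_comm hηφ hψsymm, torsionForm_sub_swap hηξ hψsymm (fun y => hωξ (φ y))⟩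

/-- Properties (3.7)–(3.10) of the torsion `T` of the
φB-connection on a manifold of the class 𝒰₃. -/
theorem statement6
    {V : Type*} [AddCommGroup V] [Module ℝ V]
    (φ : V →ₗ[ℝ] V) (ξ : V) (η : V →ₗ[ℝ] ℝ) (g : V →ₗ[ℝ] V →ₗ[ℝ] ℝ)
    (hsym : ∀ x y : V, g x y = g y x)
    (hnd : ∀ x : V, (∀ y : V, g x y = 0) → x = 0)
    (hφξ : φ ξ = 0)
    (hφ2 : ∀ x : V, φ (φ x) = -x + η x • ξ)
    (hηφ : ∀ x : V, η (φ x) = 0)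
    (hηξ : η ξ = 1)
    (hgφ : ∀ x y : V, g (φ x) (φ y) = -(g x y) + η x * η y)
    (F : V →ₗ[ℝ] V →ₗ[ℝ] V →ₗ[ℝ] ℝ)
    (hU1 : ∀ y z : V, F ξ y z = 0)
    (hU2 : ∀ x y z : V, F x y z = η y * F x z ξ + η z * F x y ξ)
    (hU3a : ∀ x y : V, F x y ξ = F y x ξ)
    (hU3b : ∀ x y : V, F x y ξ = -F (φ x) (φ y) ξ)
    (T : V → V → V → ℝ)
    (hT : ∀ x y z : V, T x y z =
      η x * F y (φ z) ξ - η y * F x (φ z) ξ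
        + η z * (F x (φ y) ξ - F y (φ x) ξ)) :
    (∀ x y z : V, T (φ x) y z + T x (φ y) z - T x y (φ z) = 0) ∧
    (∀ x y z : V, T x y z + T (φ x) y (φ z) + T x (φ y) (φ z) = 0) ∧
    (∀ x y z : V, T x (φ y) (φ z) = T x (φ z) (φ y)) ∧
    (∀ x y z : V, T x y z - T x z y = η y * T x ξ z - η z * T x ξ y) :=
  statement6_general φ ξ η hφ2 hηφ hηξ F hU1 hU3a hU3b T hT
end

section
/- Let V be a real vector space with an almost contact B-metric structure (φ, ξ, η, g). Let R be a quadrilinear form on V satisfying R(x,y,z,w) = −R(y,x,z,w) = −R(x,y,w,z) and the first Bianchi identity R(x,y,z,w) + R(y,z,x,w) + R(z,x,y,w) = 0 for all x, y, z, w ∈ V, and let h be a bilinear form on V with h(x,ξ) = h(ξ,y) = 0 for all x, y ∈ V (h plays the role of (∇η)). Define R'(x,y,z,w) := R(x,y,φ²z,φ²w) − h(x,z)h(y,w) + h(y,z)h(x,w). Then R' satisfies the first Bianchi identity R'(x,y,z,w) + R'(y,z,x,w) + R'(z,x,y,w) = 0 for all x, y, z, w ∈ V if and only if η(x)R(y,z,ξ,w)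 + η(y)R(z,x,ξ,w) + η(z)R(x,y,ξ,w) = (h(x,y)−h(y,x))h(z,w) + (h(y,z)−h(z,y))h(x,w) + (h(z,x)−h(x,z))h(y,w) for all x, y, z, w ∈ V. (This is the algebraic core of the proof that the curvature tensor of the φB-connection is of φ-Kähler type.) -/
/-!
Since `φ² = -id + η ⊗ ξ` and `R(x, y, ξ, ξ) = 0`, expanding gives
`R(x, y, φ²z, φ²w) = R(x, y, z, w) - η(w) R(x, y, z, ξ) - η(z) R(x, y, ξ, w)`.
In the cyclic sum over `x, y, z` the first two terms vanish by the Bianchi identity of `R`,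
and the `h`-terms of `R'` recombine into the right-hand side, so the cyclic sum of `R'`
is the difference of the two sides of the asserted identity.
-/

section AlmostContact

variable {K V : Type*} [CommRing K] [AddCommGroup V] [Module K V]
  {φ : V →ₗ[K] V} {ξ : V} {η : V →ₗ[K] K} {R : V →ₗ[K] V →ₗ[K] V →ₗ[K] V →ₗ[K] K}

theorem apply_phi_sq_phi_sq (hφ2 : ∀ x, φ (φ x) = -x + η x • ξ)
    (hξξ : ∀ x y, R x y ξ ξ = 0) (x y z w : V) :
    R x y (φ (φ z)) (φ (φ w)) = R x y z w - η w * R x y z ξ - η z * R x y ξ w := by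
  simp only [hφ2, map_add, map_neg, map_smul, LinearMap.add_apply, LinearMap.neg_apply,
    LinearMap.smul_apply, smul_eq_mul, hξξ]
  ring

theorem cyclic_sum_apply_phi_sq_phi_sq (hφ2 : ∀ x, φ (φ x) = -x + η x • ξ)
    (hξξ : ∀ x y, R x y ξ ξ = 0)
    (hRB : ∀ x y z w, R x y z w + R y z x w + R z x y w = 0) (x y z w : V) :
    R x y (φ (φ z)) (φ (φ w)) + R y z (φ (φ x)) (φ (φ w)) + R z x (φ (φ y)) (φ (φ w)) =
      -(η x * R y z ξ w + η y * R z x ξ w + η z * R x y ξ w) := by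
  simp only [apply_phi_sq_phi_sq hφ2 hξξ]
  linear_combination hRB x y z w - η w * hRB x y z ξ

end AlmostContact

theorem statement7_general
    {V : Type*} [AddCommGroup V] [Module ℝ V]
    (φ : V →ₗ[ℝ] V) (ξ : V) (η : V →ₗ[ℝ] ℝ)
    (hφ2 : ∀ x : V, φ (φ x) = -x + η x • ξ)
    (R : V →ₗ[ℝ] V →ₗ[ℝ] V →ₗ[ℝ] V →ₗ[ℝ] ℝ)
    (hR2 : ∀ x y z w : V, R x y z w = -R x y w z)
    (hRB : ∀ x y z w : V, R x y z w + R y z x w + R z x y w = 0)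
    (h : V →ₗ[ℝ] V →ₗ[ℝ] ℝ)
    (R' : V → V → V → V → ℝ)
    (hR' : ∀ x y z w : V, R' x y z w =
      R x y (φ (φ z)) (φ (φ w)) - h x z * h y w + h y z * h x w) :
    (∀ x y z w : V, R' x y z w + R' y z x w + R' z x y w = 0) ↔
    (∀ x y z w : V,
      η x * R y z ξ w + η y * R z x ξ w + η z * R x y ξ w =
        (h x y - h y x) * h z w + (h y z - h z y) * h x w
          + (h z x - h x z) * h y w) := by
  have hξξ : ∀ x y, R x y ξ ξ = 0 := fun x y => self_eq_neg.mp (hR2 x y ξ ξ)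
  refine forall₄_congr fun x y z w => ?_
  have hcyc := cyclic_sum_apply_phi_sq_phi_sq hφ2 hξξ hRB x y z w
  rw [hR', hR', hR']
  constructor <;> intro H <;> linear_combination hcyc - H

/-- The curvature tensor `R'` of the φB-connection on a manifold
of the class 𝒰 satisfies the first Bianchi identity if and only if the stated
identity for `R` and `h = ∇η` holds. -/
theorem statement7
    {V : Type*} [AddCommGroup V] [Module ℝ V]
    (φ : V →ₗ[ℝ] V) (ξ : V) (η : V →ₗ[ℝ] ℝ) (g : V →ₗ[ℝ] V →ₗ[ℝ] ℝ)
    (hsym : ∀ x y : V, g x y = g y x)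
    (hnd : ∀ x : V, (∀ y : V, g x y = 0) → x = 0)
    (hφξ : φ ξ = 0)
    (hφ2 : ∀ x : V, φ (φ x) = -x + η x • ξ)
    (hηφ : ∀ x : V, η (φ x) = 0)
    (hηξ : η ξ = 1)
    (hgφ : ∀ x y : V, g (φ x) (φ y) = -(g x y) + η x * η y)
    (R : V →ₗ[ℝ] V →ₗ[ℝ] V →ₗ[ℝ] V →ₗ[ℝ] ℝ)
    (hR1 : ∀ x y z w : V, R x y z w = -R y x z w)
    (hR2 : ∀ x y z w : V, R x y z w = -R x y w z)
    (hRB : ∀ x y z w : V, R x y z w + R y z x w + R z x y w = 0)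
    (h : V →ₗ[ℝ] V →ₗ[ℝ] ℝ)
    (hh1 : ∀ x : V, h x ξ = 0)
    (hh2 : ∀ y : V, h ξ y = 0)
    (R' : V → V → V → V → ℝ)
    (hR' : ∀ x y z w : V, R' x y z w =
      R x y (φ (φ z)) (φ (φ w)) - h x z * h y w + h y z * h x w) :
    (∀ x y z w : V, R' x y z w + R' y z x w + R' z x y w = 0) ↔
    (∀ x y z w : V,
      η x * R y z ξ w + η y * R z x ξ w + η z * R x y ξ w =
        (h x y - h y x) * h z w + (h y z - h z y) * h x w
          + (h z x - h x z) * h y w) :=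
  statement7_general φ ξ η hφ2 R hR2 hRB h R' hR'
end

section
/- Let V be a real vector space with an almost contact B-metric structure (φ, ξ, η, g), and let R be a quadrilinear form on V satisfying R(x,y,z,w) = −R(y,x,z,w) = −R(x,y,w,z) for all x, y, z, w ∈ V. Then: (i) if η(x)R(y,z,ξ,w) + η(y)R(z,x,ξ,w) + η(z)R(x,y,ξ,w) = 0 for all x, y, z, w ∈ V, then R(φx,φy,ξ,w) = 0 for all x, y, w ∈ V; (ii) conversely, if there is a bilinear form k on V such that R(x,y,z,ξ) = η(x)k(y,z) − η(y)k(x,z) for all x, y, z ∈ V, then η(x)R(y,z,ξ,w) + η(y)R(z,x,ξ,w) + η(z)R(x,y,ξ,w) = 0 for all x, y, z, w ∈ V. (On a manifold of the class 𝒰₃ one has k(y,z) = g(∇_yξ, ∇_zξ); these two implications are the key steps in proving that the curvature tensor of the φB-connection is of φ-Kähler type exactly on 𝒰₃.) -/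
section

variable {K V : Type*} [CommRing K] [AddCommGroup V] [Module K V]

theorem apply_xi_eq_zero_of_cyclic_sum_eq_zero
    (ξ : V) (η : V →ₗ[K] K) (R : V →ₗ[K] V →ₗ[K] V →ₗ[K] V →ₗ[K] K) (hηξ : η ξ = 1)
    (hcyc : ∀ x y z w : V, η x * R y z ξ w + η y * R z x ξ w + η z * R x y ξ w = 0)
    {a b : V} (ha : η a = 0) (hb : η b = 0) (w : V) :
    R a b ξ w = 0 := by
  simpa [ha, hb, hηξ] using hcyc a b ξ w

theorem cyclic_sum_eq_zero_of_apply_xi_eq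
    (ξ : V) (η : V →ₗ[K] K) (R : V →ₗ[K] V →ₗ[K] V →ₗ[K] V →ₗ[K] K)
    (hR : ∀ x y z w : V, R x y z w = -R x y w z) (k : V →ₗ[K] V →ₗ[K] K)
    (hk : ∀ x y z : V, R x y z ξ = η x * k y z - η y * k x z) (x y z w : V) :
    η x * R y z ξ w + η y * R z x ξ w + η z * R x y ξ w = 0 := by
  have hξ : ∀ a b : V, R a b ξ w = η b * k a w - η a * k b w := fun a b => by
    rw [hR, hk]
    ring
  rw [hξ, hξ, hξ]
  ring

end

theorem statement8_general
    {V : Type*} [AddCommGroup V] [Module ℝ V]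
    (φ : V →ₗ[ℝ] V) (ξ : V) (η : V →ₗ[ℝ] ℝ)
    (hηφ : ∀ x : V, η (φ x) = 0)
    (hηξ : η ξ = 1)
    (R : V →ₗ[ℝ] V →ₗ[ℝ] V →ₗ[ℝ] V →ₗ[ℝ] ℝ)
    (hR2 : ∀ x y z w : V, R x y z w = -R x y w z) :
    ((∀ x y z w : V,
        η x * R y z ξ w + η y * R z x ξ w + η z * R x y ξ w = 0) →
      ∀ x y w : V, R (φ x) (φ y) ξ w = 0) ∧
    ((∃ k : V →ₗ[ℝ] V →ₗ[ℝ] ℝ,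
        ∀ x y z : V, R x y z ξ = η x * k y z - η y * k x z) →
      ∀ x y z w : V,
        η x * R y z ξ w + η y * R z x ξ w + η z * R x y ξ w = 0) :=
  ⟨fun hcyc x y w =>
      apply_xi_eq_zero_of_cyclic_sum_eq_zero ξ η R hηξ hcyc (hηφ x) (hηφ y) w,
    fun ⟨k, hk⟩ => cyclic_sum_eq_zero_of_apply_xi_eq ξ η R hR2 k hk⟩

/-- The two key curvature implications in the proof that the
curvature of the φB-connection is of φ-Kähler type exactly on 𝒰₃. -/
theorem statement8
    {V : Type*} [AddCommGroup V] [Module ℝ V]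
    (φ : V →ₗ[ℝ] V) (ξ : V) (η : V →ₗ[ℝ] ℝ) (g : V →ₗ[ℝ] V →ₗ[ℝ] ℝ)
    (hsym : ∀ x y : V, g x y = g y x)
    (hnd : ∀ x : V, (∀ y : V, g x y = 0) → x = 0)
    (hφξ : φ ξ = 0)
    (hφ2 : ∀ x : V, φ (φ x) = -x + η x • ξ)
    (hηφ : ∀ x : V, η (φ x) = 0)
    (hηξ : η ξ = 1)
    (hgφ : ∀ x y : V, g (φ x) (φ y) = -(g x y) + η x * η y)
    (R : V →ₗ[ℝ] V →ₗ[ℝ] V →ₗ[ℝ] V →ₗ[ℝ] ℝ)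
    (hR1 : ∀ x y z w : V, R x y z w = -R y x z w)
    (hR2 : ∀ x y z w : V, R x y z w = -R x y w z) :
    ((∀ x y z w : V,
        η x * R y z ξ w + η y * R z x ξ w + η z * R x y ξ w = 0) →
      ∀ x y w : V, R (φ x) (φ y) ξ w = 0) ∧
    ((∃ k : V →ₗ[ℝ] V →ₗ[ℝ] ℝ,
        ∀ x y z : V, R x y z ξ = η x * k y z - η y * k x z) →
      ∀ x y z w : V,
        η x * R y z ξ w + η y * R z x ξ w + η z * R x y ξ w = 0) :=
  statement8_general φ ξ η hηφ hηξ R hR2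
end

section
/- Let λ₁, λ₂, λ₃, λ₄, μ₁, μ₃ ∈ ℝ, let V = ℝ⁵ carry the structure (φ, ξ, η, g) and bracket [·,·] of the 5-dimensional Lie group example, and let ∇ : V × V → V be the bilinear map determined by the Koszul formula 2g(∇ₓy, z) = g([x,y],z) − g([y,z],x) + g([z,x],y). Define the trilinear form F(x,y,z) := g(∇ₓ(φy) − φ(∇ₓy), z). Then F satisfies the defining conditions of the basic class 𝓕₆, namely, for all x, y, z ∈ V: F(x,y,z) = η(y)F(x,z,ξ) + η(z)F(x,y,ξ); F(ξ,y,z) = 0; F(x,y,ξ) = F(y,x,ξ) = −F(φx,φy,ξ); and the 1-forms θ(z) := Σᵢ εᵢ F(eᵢ,eᵢ,z) and θ*(z) := Σᵢ εᵢ F(eᵢ,φeᵢ,z) vanish identically, where (ε₁,…,ε₅) = (1,1,−1,−1,1). -/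
noncomputable section

/-- `V = ℝ⁵`. -/
abbrev V5 : Type := Fin 5 → ℝ

/-- The standard basis `e₁,…,e₅` of `ℝ⁵` (0-indexed: `E 0 = e₁`, …, `E 4 = e₅`). -/
def E (i : Fin 5) : V5 := Pi.single i 1

/-- The B-metric `g` of the example. -/
def gB (x y : V5) : ℝ :=
  x 0 * y 0 + x 1 * y 1 - x 2 * y 2 - x 3 * y 3 + x 4 * y 4

/-- The endomorphism `φ`: `φe₁ = e₃`, `φe₂ = e₄`, `φe₃ = −e₁`, `φe₄ = −e₂`, `φe₅ = 0`. -/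
def phiV (x : V5) : V5 := ![-(x 2), -(x 3), x 0, x 1, 0]

/-- The 1-form `η`: `η(eᵢ) = 0` for `i ≤ 4`, `η(e₅) = 1`. -/
def etaV (x : V5) : ℝ := x 4

/-- The Reeb vector field `ξ = e₅`. -/
def xiV : V5 := E 4

/-!
Since `span(e₁,…,e₄)` is an abelian ideal, the bracket is `[x, y] = η(y) A x − η(x) A y` with
`A x = [x, ξ]`. In the Koszul formula for `F`, the terms carrying `η(x)` cancel because `φ` is
`g`-symmetric and commutes with `A`, leaving
`2 F(x, y, z) = −η(z) σ(x, φy) − η(y) σ(x, φz)` with `σ(x, y) = g(Ax, y) + g(x, Ay)`.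
The `𝓕₆` identities follow from `σ(ξ, ·) = 0`, `σ(φx, y) = σ(x, φy)` and `φ³ = −φ`, while `θ` and
`θ*` are multiples of `tr(φA)` and `tr A`, which vanish: on `ker η ≅ ℂ²` (with `φ = i`) the map `A`
is complex linear and trace free.
-/

lemma gB_comm (x y : V5) : gB x y = gB y x := by
  simp only [gB]; ring

lemma gB_sub_left (x y z : V5) : gB (x - y) z = gB x z - gB y z := by
  simp only [gB, Pi.sub_apply]; ring

lemma gB_phiV_left (x y : V5) : gB (phiV x) y = gB x (phiV y) := by
  simp [gB, phiV]; ring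

lemma gB_zero_left (y : V5) : gB 0 y = 0 := by
  simp [gB]

lemma gB_zero_right (x : V5) : gB x 0 = 0 := by
  simp [gB]

lemma gB_neg_right (x y : V5) : gB x (-y) = -gB x y := by
  simp only [gB, Pi.neg_apply]; ring

lemma gB_xiV_left (y : V5) : gB xiV y = etaV y := by
  simp [gB, xiV, etaV, E]

lemma etaV_phiV (x : V5) : etaV (phiV x) = 0 := by
  simp [etaV, phiV]

lemma phiV_xiV : phiV xiV = 0 := by
  funext i; fin_cases i <;> simp [phiV, xiV, E]

lemma etaV_xiV : etaV xiV = 1 := by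
  simp [etaV, xiV, E]

lemma etaV_E_of_ne {i : Fin 5} (hi : i ≠ 4) : etaV (E i) = 0 := by
  simp [etaV, E, hi.symm]

lemma phiV_phiV (x : V5) : phiV (phiV x) = etaV x • xiV - x := by
  funext i; fin_cases i <;> simp [phiV, xiV, etaV, E]

lemma eq_sum_E (x : V5) :
    x = x 0 • E 0 + x 1 • E 1 + x 2 • E 2 + x 3 • E 3 + x 4 • E 4 := by
  funext i; fin_cases i <;> simp [E]

lemma bracket_eq_etaV_smul (br : V5 →ₗ[ℝ] V5 →ₗ[ℝ] V5)
    (hanti : ∀ x y : V5, br x y = -br y x)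
    (hij : ∀ i j : Fin 5, i ≠ 4 → j ≠ 4 → br (E i) (E j) = 0) (x y : V5) :
    br x y = etaV y • br x xiV - etaV x • br y xiV := by
  have hxi : br xiV xiV = 0 := self_eq_neg.mp (hanti xiV xiV)
  rw [eq_sum_E x, eq_sum_E y]
  simp only [xiV] at hxi ⊢
  simp only [map_add, map_smul, LinearMap.add_apply, LinearMap.smul_apply, hanti (E 4) (E 0),
    hanti (E 4) (E 1), hanti (E 4) (E 2), hanti (E 4) (E 3), hxi]
  simp (disch := decide) only [hij, smul_zero, zero_add, add_zero]
  simp [etaV, E]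
  module

section Sym

variable (A : V5 →ₗ[ℝ] V5)

def gSym (x y : V5) : ℝ := gB (A x) y + gB x (A y)

lemma gSym_comm (x y : V5) : gSym A x y = gSym A y x := by
  rw [gSym, gSym, gB_comm (A x), gB_comm x, add_comm]

lemma gSym_phiV_left (hA : ∀ v, A (phiV v) = phiV (A v)) (x y : V5) :
    gSym A (phiV x) y = gSym A x (phiV y) := by
  simp only [gSym, hA, gB_phiV_left]

lemma gSym_xiV_left (hξ : A xiV = 0) (hη : ∀ v, etaV (A v) = 0) (y : V5) :
    gSym A xiV y = 0 := by
  rw [gSym, hξ, gB_zero_left, gB_xiV_left, hη, add_zero]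

lemma gSym_zero_right (x : V5) : gSym A x 0 = 0 := by
  rw [gSym, map_zero, gB_zero_right, gB_zero_right, add_zero]

lemma gSym_neg_right (x y : V5) : gSym A x (-y) = -gSym A x y := by
  rw [gSym, gSym, map_neg, gB_neg_right, gB_neg_right, neg_add]

lemma fundamental_tensor_eq_of_koszul (hA : ∀ v, A (phiV v) = phiV (A v))
    (br D : V5 → V5 → V5) (hbr : ∀ x y, br x y = etaV y • A x - etaV x • A y)
    (hKoszul : ∀ x y z : V5,
      2 * gB (D x y) z = gB (br x y) z - gB (br y z) x + gB (br z x) y) (x y z : V5) :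
    gB (D x (phiV y) - phiV (D x y)) z =
      -(etaV z * gSym A x (phiV y) + etaV y * gSym A x (phiV z)) / 2 := by
  have h1 := hKoszul x (phiV y) z
  have h2 := hKoszul x y (phiV z)
  rw [gB_sub_left, gB_phiV_left]
  simp only [gSym, hbr, hA] at h1 h2 ⊢
  simp only [gB, phiV, etaV, Pi.sub_apply, Pi.smul_apply, smul_eq_mul,
    Matrix.cons_val_zero, Matrix.cons_val_one, Matrix.cons_val_two, Matrix.cons_val_three,
    Matrix.cons_val_four, Matrix.head_cons, Matrix.tail_cons] at h1 h2 ⊢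
  linear_combination (h1 - h2) / 2

end Sym

section AdXi

variable (l1 l2 l3 l4 m1 m3 : ℝ)

/-- The map `x ↦ [x, ξ]` (that is, `−ad ξ`). -/
def adXi : V5 →ₗ[ℝ] V5 where
  toFun x := ![l1 * x 0 + m1 * x 1 - l3 * x 2 - m3 * x 3,
    l2 * x 0 - l1 * x 1 - l4 * x 2 + l3 * x 3,
    l3 * x 0 + m3 * x 1 + l1 * x 2 + m1 * x 3,
    l4 * x 0 - l3 * x 1 + l2 * x 2 - l1 * x 3,
    0]
  map_add' x y := by funext i; fin_cases i <;> simp <;> ring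
  map_smul' c x := by funext i; fin_cases i <;> simp <;> ring

local notation "𝔸" => adXi l1 l2 l3 l4 m1 m3

lemma apply_xiV_eq_adXi (br : V5 →ₗ[ℝ] V5 →ₗ[ℝ] V5)
    (hanti : ∀ x y : V5, br x y = -br y x)
    (h15 : br (E 0) (E 4) = l1 • E 0 + l2 • E 1 + l3 • E 2 + l4 • E 3)
    (h25 : br (E 1) (E 4) = m1 • E 0 + (-l1) • E 1 + m3 • E 2 + (-l3) • E 3)
    (h35 : br (E 2) (E 4) = (-l3) • E 0 + (-l4) • E 1 + l1 • E 2 + l2 • E 3)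
    (h45 : br (E 3) (E 4) = (-m3) • E 0 + l3 • E 1 + m1 • E 2 + (-l1) • E 3) (x : V5) :
    br x xiV = 𝔸 x := by
  have h55 : br (E 4) (E 4) = 0 := self_eq_neg.mp (hanti _ _)
  conv_lhs => rw [eq_sum_E x]
  simp only [xiV, map_add, map_smul, LinearMap.add_apply, LinearMap.smul_apply,
    h15, h25, h35, h45, h55]
  funext i
  fin_cases i <;> simp [adXi, E] <;> ring

lemma adXi_phiV (x : V5) : 𝔸 (phiV x) = phiV (𝔸 x) := by
  funext i; fin_cases i <;> simp [adXi, phiV] <;> ring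

lemma etaV_adXi (x : V5) : etaV (𝔸 x) = 0 := by
  simp [etaV, adXi]

lemma adXi_xiV : 𝔸 xiV = 0 := by
  funext i; fin_cases i <;> simp [adXi, xiV, E]

-- These sums are `2 tr(φA)` and `−2 tr A`.
lemma sum_gSym_adXi_phiV :
    gSym 𝔸 (E 0) (phiV (E 0)) + gSym 𝔸 (E 1) (phiV (E 1)) - gSym 𝔸 (E 2) (phiV (E 2))
      - gSym 𝔸 (E 3) (phiV (E 3)) + gSym 𝔸 (E 4) (phiV (E 4)) = 0 := by
  simp [gSym, gB, adXi, phiV, E]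

lemma sum_gSym_adXi_phiV_phiV :
    gSym 𝔸 (E 0) (phiV (phiV (E 0))) + gSym 𝔸 (E 1) (phiV (phiV (E 1)))
      - gSym 𝔸 (E 2) (phiV (phiV (E 2))) - gSym 𝔸 (E 3) (phiV (phiV (E 3)))
      + gSym 𝔸 (E 4) (phiV (phiV (E 4))) = 0 := by
  simp [gSym, gB, adXi, phiV, E]

end AdXi

/-- The fundamental tensor `F(x,y,z) = g((∇ₓφ)y, z)` of the
5-dimensional Lie group example satisfies the defining conditions of the
basic class 𝓕₆. -/
theorem statement11 (l1 l2 l3 l4 m1 m3 : ℝ)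
    (br : V5 →ₗ[ℝ] V5 →ₗ[ℝ] V5)
    (hanti : ∀ x y : V5, br x y = -br y x)
    (hij : ∀ i j : Fin 5, i ≠ 4 → j ≠ 4 → br (E i) (E j) = 0)
    (h15 : br (E 0) (E 4) = l1 • E 0 + l2 • E 1 + l3 • E 2 + l4 • E 3)
    (h25 : br (E 1) (E 4) = m1 • E 0 + (-l1) • E 1 + m3 • E 2 + (-l3) • E 3)
    (h35 : br (E 2) (E 4) = (-l3) • E 0 + (-l4) • E 1 + l1 • E 2 + l2 • E 3)
    (h45 : br (E 3) (E 4) = (-m3) • E 0 + l3 • E 1 + m1 • E 2 + (-l1) • E 3)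
    (D : V5 →ₗ[ℝ] V5 →ₗ[ℝ] V5)
    (hKoszul : ∀ x y z : V5,
      2 * gB (D x y) z = gB (br x y) z - gB (br y z) x + gB (br z x) y)
    (F : V5 → V5 → V5 → ℝ)
    (hF : ∀ x y z : V5, F x y z = gB (D x (phiV y) - phiV (D x y)) z) :
    (∀ x y z : V5, F x y z = etaV y * F x z xiV + etaV z * F x y xiV) ∧
    (∀ y z : V5, F xiV y z = 0) ∧
    (∀ x y : V5, F x y xiV = F y x xiV) ∧
    (∀ x y : V5, F x y xiV = -F (phiV x) (phiV y) xiV) ∧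
    (∀ z : V5, F (E 0) (E 0) z + F (E 1) (E 1) z - F (E 2) (E 2) z
      - F (E 3) (E 3) z + F (E 4) (E 4) z = 0) ∧
    (∀ z : V5, F (E 0) (phiV (E 0)) z + F (E 1) (phiV (E 1)) z
      - F (E 2) (phiV (E 2)) z - F (E 3) (phiV (E 3)) z
      + F (E 4) (phiV (E 4)) z = 0) := by
  set A := adXi l1 l2 l3 l4 m1 m3
  have hAbr : ∀ x, br x xiV = A x :=
    apply_xiV_eq_adXi l1 l2 l3 l4 m1 m3 br hanti h15 h25 h35 h45
  have hA : ∀ v, A (phiV v) = phiV (A v) := adXi_phiV l1 l2 l3 l4 m1 m3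
  have hσξ : ∀ v, gSym A xiV v = 0 :=
    gSym_xiV_left A (adXi_xiV l1 l2 l3 l4 m1 m3) (etaV_adXi l1 l2 l3 l4 m1 m3)
  have hbr : ∀ x y, br x y = etaV y • A x - etaV x • A y := by
    intro x y
    rw [bracket_eq_etaV_smul br hanti hij, hAbr, hAbr]
  have hFσ : ∀ x y z,
      F x y z = -(etaV z * gSym A x (phiV y) + etaV y * gSym A x (phiV z)) / 2 := fun x y z =>
    (hF x y z).trans <| fundamental_tensor_eq_of_koszul A hA (fun x y => br x y)
      (fun x y => D x y) hbr hKoszul x y z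
  refine ⟨fun x y z => ?_, fun y z => ?_, fun x y => ?_, fun x y => ?_, fun z => ?_, fun z => ?_⟩
    <;> simp only [hFσ]
  · simp only [etaV_xiV, phiV_xiV, gSym_zero_right]
    ring
  · simp only [hσξ]
    ring
  · rw [gSym_comm A x (phiV y), gSym_phiV_left A hA]
    simp only [phiV_xiV, gSym_zero_right, mul_zero]
  · rw [gSym_phiV_left A hA, phiV_phiV (phiV y), etaV_phiV, zero_smul, zero_sub, gSym_neg_right]
    simp only [phiV_xiV, gSym_zero_right]
    ring
  · have h4 : gSym A (E 4) (phiV z) = 0 := hσξ _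
    simp (disch := decide) only [etaV_E_of_ne, h4]
    linear_combination (-etaV z / 2) * sum_gSym_adXi_phiV l1 l2 l3 l4 m1 m3
  · simp only [etaV_phiV]
    linear_combination (-etaV z / 2) * sum_gSym_adXi_phiV_phiV l1 l2 l3 l4 m1 m3
end
end
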